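/- arXiv:0708.0303 — 3 statements merged into one kernel-verified Lean document; each statement's English description precedes it below -/
import Mathlib

section
/- Under the same hypotheses, sup over pairs (s,t) with s,t ≤ 0 of ‖(H+1)W(t,s)(H+1)^{-1}‖ is finite. -/
open Filter MeasureTheory Complex ContinuousLinearMap
open scoped Topology InnerProductSpace

private lemma my_gronwall_fwd (f f' c d : ℝ → ℝ) (a b : ℝ) (hab : a ≤ b)
    (hf : ∀ t, HasDerivAt f (f' t) t)
    (hc : Continuous c) (hd : Continuous d)
    (hc0 : ∀ t, 0 ≤ c t) (hd0 : ∀ t, 0 ≤ d t)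
    (hbound : ∀ t, f' t ≤ c t * f t + d t) :
    f b ≤ Real.exp (∫ r in a..b, c r) * (f a + ∫ r in a..b, d r) := by
  set C : ℝ → ℝ := fun t => ∫ r in a..t, c r with hCdef
  have hC : ∀ t, HasDerivAt C (c t) t := fun t =>
    intervalIntegral.integral_hasDerivAt_right (hc.intervalIntegrable a t)
      (hc.stronglyMeasurableAtFilter _ _) hc.continuousAt
  have hCcont : Continuous C := by
    apply continuous_iff_continuousAt.2 (fun t => ((hC t).differentiableAt).continuousAt)
  set g : ℝ → ℝ := fun t => Real.exp (-C t) * d t with hgdef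
  have hg : Continuous g := (hCcont.neg.rexp).mul hd
  set Dd : ℝ → ℝ := fun t => ∫ r in a..t, g r with hDddef
  have hDd : ∀ t, HasDerivAt Dd (g t) t := fun t =>
    intervalIntegral.integral_hasDerivAt_right (hg.intervalIntegrable a t)
      (hg.stronglyMeasurableAtFilter _ _) hg.continuousAt
  set G : ℝ → ℝ := fun t => Real.exp (-C t) * f t - Dd t with hGdef
  have hG : ∀ t, HasDerivAt G (Real.exp (-C t) * (f' t - c t * f t) - g t) t := by
    intro t
    have h1 : HasDerivAt (fun u => Real.exp (-C u)) (Real.exp (-C t) * (-(c t))) t :=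
      (hC t).neg.exp
    have h2 := (h1.mul (hf t)).sub (hDd t)
    rw [show Real.exp (-C t) * (f' t - c t * f t) - g t = Real.exp (-C t) * -c t * f t + Real.exp (-C t) * f' t - g t by ring]
    exact h2
  have hGanti : Antitone G := by
    apply antitone_of_deriv_nonpos (fun t => (hG t).differentiableAt)
    intro t
    rw [(hG t).deriv]
    have h3 : f' t - c t * f t ≤ d t := by linarith [hbound t]
    have h4 : Real.exp (-C t) * (f' t - c t * f t) ≤ Real.exp (-C t) * d t :=
      mul_le_mul_of_nonneg_left h3 (Real.exp_nonneg _)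
    simp only [hgdef]
    linarith
  have hGba : G b ≤ G a := hGanti hab
  have hCa : C a = 0 := by simp [hCdef]
  have hDda : Dd a = 0 := by simp [hDddef]
  have hkey : Real.exp (-C b) * f b ≤ f a + Dd b := by
    have := hGba
    simp only [hGdef, hCa, hDda, Real.exp_zero, neg_zero, one_mul, sub_zero] at this
    linarith
  have hDdb : Dd b ≤ ∫ r in a..b, d r := by
    apply intervalIntegral.integral_mono_on hab (hg.intervalIntegrable a b)
      (hd.intervalIntegrable a b)
    intro r hr
    have hCr : 0 ≤ C r := intervalIntegral.integral_nonneg hr.1 (fun u _ => hc0 u)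
    have : Real.exp (-C r) ≤ 1 := by
      rw [Real.exp_le_one_iff]
      linarith
    calc Real.exp (-C r) * d r ≤ 1 * d r := mul_le_mul_of_nonneg_right this (hd0 r)
    _ = d r := one_mul _
  have hkey2 : Real.exp (-C b) * f b ≤ f a + ∫ r in a..b, d r := by linarith
  have h5 : Real.exp (C b) * (Real.exp (-C b) * f b) ≤
      Real.exp (C b) * (f a + ∫ r in a..b, d r) :=
    mul_le_mul_of_nonneg_left hkey2 (le_of_lt (Real.exp_pos (C b)))
  calc f b = Real.exp (C b) * (Real.exp (-C b) * f b) := by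
        rw [← mul_assoc, ← Real.exp_add]; simp
  _ ≤ Real.exp (C b) * (f a + ∫ r in a..b, d r) := h5

private lemma my_gronwall_bwd (f f' c d : ℝ → ℝ) (a b : ℝ) (hab : a ≤ b)
    (hf : ∀ t, HasDerivAt f (f' t) t)
    (hc : Continuous c) (hd : Continuous d)
    (hc0 : ∀ t, 0 ≤ c t) (hd0 : ∀ t, 0 ≤ d t)
    (hbound : ∀ t, -(f' t) ≤ c t * f t + d t) :
    f a ≤ Real.exp (∫ r in a..b, c r) * (f b + ∫ r in a..b, d r) := by
  have hrefl : ∀ t : ℝ, HasDerivAt (fun u : ℝ => a + b - u) (-1 : ℝ) t := by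
    intro t
    simpa using ((hasDerivAt_id t).const_sub (a + b))
  have hF : ∀ t, HasDerivAt (fun u => f (a + b - u)) (-(f' (a + b - t))) t := by
    intro t
    have := (hf (a + b - t)).scomp t (hrefl t)
    simp at this
    exact this
  have key := my_gronwall_fwd (fun u => f (a + b - u)) (fun u => -(f' (a + b - u)))
    (fun u => c (a + b - u)) (fun u => d (a + b - u)) a b hab hF
    (hc.comp (by continuity)) (hd.comp (by continuity))
    (fun t => hc0 _) (fun t => hd0 _) (fun t => hbound _)
  simp only [show a + b - b = a by ring, show a + b - a = b by ring] at key
  rw [intervalIntegral.integral_comp_sub_left (fun u => c u) (a+b),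
      intervalIntegral.integral_comp_sub_left (fun u => d u) (a+b)] at key
  simp only [show a + b - b = a by ring, show a + b - a = b by ring] at key
  exact key

set_option maxHeartbeats 2000000 in
/-- Uniform boundedness of `(H+1) W(t,s) (H+1)⁻¹` over all `s, t ≤ 0`,
for the adiabatic propagator `W(t,s)` of `K(t) = H + χ(ηt) V`. -/
theorem propagator_H_plus_one_conjugation_bounded
    {𝓗 : Type*} [NormedAddCommGroup 𝓗] [InnerProductSpace ℂ 𝓗] [CompleteSpace 𝓗]
    -- the (possibly unbounded) nonnegative self-adjoint operator H with domain D
    (D : Submodule ℂ 𝓗) (hdense : Dense (D : Set 𝓗))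
    (Hop : D →ₗ[ℂ] 𝓗)
    (hsym : ∀ x y : D, ⟪Hop x, (y : 𝓗)⟫_ℂ = ⟪(x : 𝓗), Hop y⟫_ℂ)
    (hpos : ∀ x : D, 0 ≤ (⟪(x : 𝓗), Hop x⟫_ℂ).re)
    -- the bounded self-adjoint perturbation V
    (V : 𝓗 →L[ℂ] 𝓗) (hV : IsSelfAdjoint V)
    -- the smooth switching function χ with χ, χ' ∈ L¹((-∞,0]) and χ(0) = 1
    (χ : ℝ → ℝ) (hχsmooth : ContDiff ℝ (⊤ : ℕ∞) χ)
    (hχint : IntegrableOn χ (Set.Iic 0))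
    (hχ'int : IntegrableOn (deriv χ) (Set.Iic 0))
    (hχ0 : χ 0 = 1)
    -- the adiabatic parameter
    (η : ℝ) (hη : 0 < η)
    -- the unitary propagator W(t,s) solving i ∂ₜ W(t,s) = (H + χ(ηt)V) W(t,s), W(s,s) = 1
    (W : ℝ → ℝ → (𝓗 →L[ℂ] 𝓗))
    (hWinit : ∀ s : ℝ, W s s = 1)
    (hWunitary : ∀ t s : ℝ,
      (W t s) ∘L (adjoint (W t s)) = 1 ∧ (adjoint (W t s)) ∘L (W t s) = 1)
    (hWcocycle : ∀ t r s : ℝ, (W t r) ∘L (W r s) = W t s)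
    (hWdom : ∀ t s : ℝ, ∀ x : D, W t s (x : 𝓗) ∈ D)
    (hWeq : ∀ s : ℝ, ∀ x : D, ∀ t : ℝ,
      HasDerivAt (fun τ : ℝ => W τ s (x : 𝓗))
        ((-Complex.I) • (Hop ⟨W t s (x : 𝓗), hWdom t s x⟩
          + (χ (η * t) : ℂ) • V (W t s (x : 𝓗)))) t) :
    -- conclusion: sup over s,t ≤ 0 of ‖(H+1) W(t,s) (H+1)⁻¹‖ is finite, expressed as a
    -- uniform bound ‖(H+1) W(t,s) x‖ ≤ C ‖(H+1) x‖ on the domain of H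
    ∃ C : ℝ, ∀ s t : ℝ, s ≤ 0 → t ≤ 0 → ∀ x : D,
      ‖Hop ⟨W t s (x : 𝓗), hWdom t s x⟩ + W t s (x : 𝓗)‖ ≤ C * ‖Hop x + (x : 𝓗)‖ := by
  classical
  have hχcont : Continuous χ := hχsmooth.continuous
  have hχ'cont : Continuous (deriv χ) := hχsmooth.continuous_deriv (by simp)
  have hχdiff : ∀ u : ℝ, HasDerivAt χ (deriv χ u) u := fun u =>
    ((hχsmooth.differentiable (by simp)) u).hasDerivAt
  have hIicη : Set.Iic η = Set.Iic 0 ∪ Set.Ioc 0 η := (Set.Iic_union_Ioc_eq_Iic hη.le).symm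
  have hχintη : IntegrableOn χ (Set.Iic η) := by
    rw [hIicη]; exact hχint.union (hχcont.integrableOn_Ioc)
  have hχ'intη : IntegrableOn (deriv χ) (Set.Iic η) := by
    rw [hIicη]; exact hχ'int.union (hχ'cont.integrableOn_Ioc)
  have habsχ : IntegrableOn (fun u => |χ u|) (Set.Iic η) := hχintη.abs
  have habsχ' : IntegrableOn (fun u => |deriv χ u|) (Set.Iic η) := hχ'intη.abs
  have habsχ'0 : IntegrableOn (fun u => |deriv χ u|) (Set.Iic (0:ℝ)) := hχ'int.abs
  set M : ℝ := 1 + ∫ u in Set.Iic (0:ℝ), |deriv χ u| with hMdef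
  set J : ℝ := ∫ u in Set.Iic η, |χ u| with hJdef
  set Jd : ℝ := ∫ u in Set.Iic η, |deriv χ u| with hJddef
  have hJ0 : 0 ≤ J := setIntegral_nonneg measurableSet_Iic (fun u _ => abs_nonneg _)
  have hJd0 : 0 ≤ Jd := setIntegral_nonneg measurableSet_Iic (fun u _ => abs_nonneg _)
  have hM1 : (1:ℝ) ≤ M := by
    have h0 : 0 ≤ ∫ u in Set.Iic (0:ℝ), |deriv χ u| :=
      setIntegral_nonneg measurableSet_Iic (fun u _ => abs_nonneg _)
    rw [hMdef]; linarith
  have hM0 : (0:ℝ) ≤ M := le_trans zero_le_one hM1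
  -- pointwise bound for χ on Iic 0
  have hχM : ∀ u : ℝ, u ≤ 0 → |χ u| ≤ M := by
    intro u hu
    have hFTC : ∫ r in u..0, deriv χ r = χ 0 - χ u :=
      intervalIntegral.integral_deriv_eq_sub
        (fun r _ => (hχsmooth.differentiable (by simp)) r)
        (hχ'cont.intervalIntegrable u 0)
    have h2 : |∫ r in u..0, deriv χ r| ≤ ∫ r in u..0, |deriv χ r| :=
      intervalIntegral.abs_integral_le_integral_abs hu
    have h3 : ∫ r in u..0, |deriv χ r| = ∫ r in Set.Ioc u 0, |deriv χ r| :=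
      intervalIntegral.integral_of_le hu
    have h4 : ∫ r in Set.Ioc u 0, |deriv χ r| ≤ ∫ r in Set.Iic (0:ℝ), |deriv χ r| :=
      setIntegral_mono_set habsχ'0
        (Filter.Eventually.of_forall (fun r => abs_nonneg _))
        (HasSubset.Subset.eventuallyLE Set.Ioc_subset_Iic_self)
    have h5 : |χ u| ≤ |χ 0| + |χ 0 - χ u| := by
      calc |χ u| = |χ 0 - (χ 0 - χ u)| := by norm_num
      _ ≤ |χ 0| + |χ 0 - χ u| := abs_sub _ _
    rw [← hFTC, hχ0] at h5
    simp only [abs_one] at h5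
    rw [hMdef]
    linarith
  -- norm preservation
  have hWnorm : ∀ t' s' : ℝ, ∀ z : 𝓗, ‖W t' s' z‖ = ‖z‖ := by
    intro t' s' z
    have h1 : ⟪W t' s' z, W t' s' z⟫_ℂ = ⟪z, z⟫_ℂ := by
      calc ⟪W t' s' z, W t' s' z⟫_ℂ
          = ⟪z, ContinuousLinearMap.adjoint (W t' s') (W t' s' z)⟫_ℂ :=
            (ContinuousLinearMap.adjoint_inner_right _ _ _).symm
      _ = ⟪z, ((ContinuousLinearMap.adjoint (W t' s')) ∘L (W t' s')) z⟫_ℂ := rfl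
      _ = ⟪z, z⟫_ℂ := by rw [(hWunitary t' s').2]; rfl
    rw [inner_self_eq_norm_sq_to_K, inner_self_eq_norm_sq_to_K] at h1
    have h2 : (‖W t' s' z‖:ℝ)^2 = (‖z‖:ℝ)^2 := by exact_mod_cast h1
    calc ‖W t' s' z‖ = Real.sqrt (‖W t' s' z‖^2) := (Real.sqrt_sq (norm_nonneg _)).symm
    _ = Real.sqrt (‖z‖^2) := by rw [h2]
    _ = ‖z‖ := Real.sqrt_sq (norm_nonneg _)
  -- ‖x‖ ≤ ‖Hx + x‖
  have hxle : ∀ x : D, ‖(x:𝓗)‖ ≤ ‖Hop x + (x:𝓗)‖ := by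
    intro x
    rcases eq_or_lt_of_le (norm_nonneg (x:𝓗)) with h0 | h0
    · rw [← h0]; exact norm_nonneg _
    have h1 : (‖(x:𝓗)‖:ℝ)^2 ≤ (⟪(x:𝓗), Hop x + (x:𝓗)⟫_ℂ).re := by
      rw [inner_add_right]
      have h2 := hpos x
      have h3 : (⟪(x:𝓗), (x:𝓗)⟫_ℂ).re = ‖(x:𝓗)‖^2 := by
        have h4 := @inner_self_eq_norm_sq ℂ _ _ _ _ (x:𝓗)
        simpa using h4
      simp only [Complex.add_re]
      linarith
    have h3 : (⟪(x:𝓗), Hop x + (x:𝓗)⟫_ℂ).re ≤ ‖(x:𝓗)‖ * ‖Hop x + (x:𝓗)‖ := by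
      calc (⟪(x:𝓗), Hop x + (x:𝓗)⟫_ℂ).re ≤ |(⟪(x:𝓗), Hop x + (x:𝓗)⟫_ℂ).re| := le_abs_self _
      _ ≤ ‖⟪(x:𝓗), Hop x + (x:𝓗)⟫_ℂ‖ := Complex.abs_re_le_norm _
      _ = ‖⟪(x:𝓗), Hop x + (x:𝓗)⟫_ℂ‖ := rfl
      _ ≤ ‖(x:𝓗)‖ * ‖Hop x + (x:𝓗)‖ := norm_inner_le_norm _ _
    nlinarith [norm_nonneg (Hop x + (x:𝓗))]
  -- real smul as complex smul
  have hsmulRC : ∀ (r : ℝ) (z : 𝓗), r • z = (r : ℂ) • z := by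
    intro r z
    rw [← algebraMap_smul ℂ r z]
    norm_num
  refine ⟨Real.exp (‖V‖ * J / η) * (2 + M * ‖V‖ + ‖V‖ * Jd) + (1 + M * ‖V‖), ?_⟩
  intro s t hs ht x
  set y : ℝ → 𝓗 := fun τ => W τ s (x : 𝓗) with hydef
  set yD : ℝ → D := fun τ => (⟨W τ s (x : 𝓗), hWdom τ s x⟩ : D) with hyDdef
  set v : ℝ → 𝓗 := fun τ => (-Complex.I) • (Hop (yD τ) + (χ (η * τ) : ℂ) • V (y τ)) with hvdef
  have hy : ∀ τ, HasDerivAt y (v τ) τ := fun τ => hWeq s x τ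
  have hynorm : ∀ τ, ‖y τ‖ = ‖(x:𝓗)‖ := fun τ => hWnorm τ s (x:𝓗)
  have hyDs : yD s = x := by
    apply Subtype.ext
    simp only [hyDdef, hWinit s]
    rfl
  have hMb : ∀ τ : ℝ, τ ≤ 0 → |χ (η * τ)| ≤ M := fun τ hτ =>
    hχM (η * τ) (mul_nonpos_iff.mpr (Or.inl ⟨hη.le, hτ⟩))
  -- the key uniform estimate on the derivative
  have hmain : ‖v t‖ ≤ Real.exp (‖V‖ * J / η) * (‖v s‖ + ‖V‖ * Jd * ‖(x:𝓗)‖) := by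
    have hstep : ∀ h : ℝ, 0 < h → h ≤ 1 →
        ‖h⁻¹ • (y (t + h) - y t)‖ ≤
          Real.exp (‖V‖ * J / η) * (‖h⁻¹ • (y (s + h) - y s)‖ + ‖V‖ * Jd * ‖(x:𝓗)‖) := by
      intro h hh0 hh1
      have hhne : h ≠ 0 := ne_of_gt hh0
      set Y : ℝ → 𝓗 := fun τ => h⁻¹ • (y (τ + h) - y τ) with hYdef
      set Yd : ℝ → 𝓗 := fun τ => h⁻¹ • (v (τ + h) - v τ) with hYddef
      have hYderiv : ∀ τ, HasDerivAt Y (Yd τ) τ := by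
        intro τ
        have h1 : HasDerivAt (fun u : ℝ => y (u + h)) (v (τ + h)) τ := by
          have h2 := (hy (τ + h)).scomp τ ((hasDerivAt_id τ).add_const h)
          simp at h2
          exact h2
        exact (h1.sub (hy τ)).const_smul h⁻¹
      set c : ℝ → ℝ := fun τ => ‖V‖ * |χ (η * (τ + h))| with hcdef
      set d : ℝ → ℝ := fun τ => (‖V‖ * ‖(x:𝓗)‖ / h) * |χ (η * (τ + h)) - χ (η * τ)| with hddef
      have hcomp1 : Continuous (fun τ : ℝ => χ (η * (τ + h))) :=
        hχcont.comp (continuous_const.mul (continuous_id.add continuous_const))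
      have hcomp2 : Continuous (fun τ : ℝ => χ (η * τ)) :=
        hχcont.comp (continuous_const.mul continuous_id)
      have hccont : Continuous c := continuous_const.mul hcomp1.abs
      have hdcont : Continuous d := continuous_const.mul (hcomp1.sub hcomp2).abs
      have hc0 : ∀ τ, 0 ≤ c τ := fun τ => mul_nonneg (norm_nonneg _) (abs_nonneg _)
      have hd0 : ∀ τ, 0 ≤ d τ := fun τ =>
        mul_nonneg (div_nonneg (mul_nonneg (norm_nonneg _) (norm_nonneg _)) hh0.le) (abs_nonneg _)
      have hkey : ∀ τ, |2 * (⟪Y τ, Yd τ⟫_ℂ).re| ≤ 2 * ‖Y τ‖ * (c τ * ‖Y τ‖ + d τ) := by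
        intro τ
        set δ : 𝓗 := y (τ + h) - y τ with hδdef
        set δD : D := yD (τ + h) - yD τ with hδDdef
        have hδcoe : ((δD : D) : 𝓗) = δ := rfl
        set Δ : 𝓗 := (χ (η * (τ + h)) : ℂ) • V (y (τ + h)) - (χ (η * τ) : ℂ) • V (y τ) with hΔdef
        have hvdiff : v (τ + h) - v τ = (-Complex.I) • ((Hop δD : 𝓗) + Δ) := by
          simp only [hvdef, hδDdef, hΔdef, map_sub, ← smul_sub]
          congr 1
          abel
        have hinner : ⟪Y τ, Yd τ⟫_ℂ =
            ((h⁻¹ : ℝ) : ℂ) * (((h⁻¹ : ℝ) : ℂ) *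
              ((-Complex.I) * (⟪δ, (Hop δD : 𝓗)⟫_ℂ + ⟪δ, Δ⟫_ℂ))) := by
          show ⟪h⁻¹ • δ, h⁻¹ • (v (τ + h) - v τ)⟫_ℂ = _
          rw [hvdiff, hsmulRC h⁻¹ δ, hsmulRC h⁻¹ _, inner_smul_left, inner_smul_right,
            inner_smul_right, inner_add_right, Complex.conj_ofReal]
        have hS1 : (⟪δ, (Hop δD : 𝓗)⟫_ℂ).im = 0 := by
          have h6 := hsym δD δD
          have h7 : (starRingEnd ℂ) ⟪((δD : D) : 𝓗), Hop δD⟫_ℂ = ⟪((δD : D) : 𝓗), Hop δD⟫_ℂ := by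
            rw [inner_conj_symm]
            exact h6
          rw [hδcoe] at h7
          exact Complex.conj_eq_iff_im.mp h7
        have hre : (⟪Y τ, Yd τ⟫_ℂ).re = h⁻¹ * (h⁻¹ * (⟪δ, Δ⟫_ℂ).im) := by
          rw [hinner]
          simp [Complex.mul_re, Complex.mul_im, Complex.ofReal_re, Complex.ofReal_im,
            Complex.add_im, Complex.add_re, Complex.neg_re, Complex.neg_im,
            Complex.I_re, Complex.I_im, hS1]
        have him : |(⟪δ, Δ⟫_ℂ).im| ≤ ‖δ‖ * ‖Δ‖ := by
          calc |(⟪δ, Δ⟫_ℂ).im| ≤ ‖⟪δ, Δ⟫_ℂ‖ := Complex.abs_im_le_norm _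
          _ = ‖⟪δ, Δ⟫_ℂ‖ := rfl
          _ ≤ ‖δ‖ * ‖Δ‖ := norm_inner_le_norm _ _
        have hΔbound : ‖Δ‖ ≤ |χ (η * (τ + h))| * (‖V‖ * ‖δ‖)
            + |χ (η * (τ + h)) - χ (η * τ)| * (‖V‖ * ‖(x:𝓗)‖) := by
          have h9 : Δ = (χ (η * (τ + h)) : ℂ) • V δ
              + ((χ (η * (τ + h)) - χ (η * τ) : ℝ) : ℂ) • V (y τ) := by
            rw [hΔdef, hδdef, map_sub]
            push_cast
            rw [sub_smul, smul_sub]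
            abel
          rw [h9]
          have h10 : ‖(χ (η * (τ + h)) : ℂ) • V δ‖ ≤ |χ (η * (τ + h))| * (‖V‖ * ‖δ‖) := by
            rw [norm_smul, Complex.norm_real, Real.norm_eq_abs]
            exact mul_le_mul_of_nonneg_left (V.le_opNorm _) (abs_nonneg _)
          have h11 : ‖((χ (η * (τ + h)) - χ (η * τ) : ℝ) : ℂ) • V (y τ)‖ ≤
              |χ (η * (τ + h)) - χ (η * τ)| * (‖V‖ * ‖(x:𝓗)‖) := by
            rw [norm_smul, Complex.norm_real, Real.norm_eq_abs]
            apply mul_le_mul_of_nonneg_left _ (abs_nonneg _)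
            calc ‖V (y τ)‖ ≤ ‖V‖ * ‖y τ‖ := V.le_opNorm _
            _ = ‖V‖ * ‖(x:𝓗)‖ := by rw [hynorm τ]
          calc ‖(χ (η * (τ + h)) : ℂ) • V δ + ((χ (η * (τ + h)) - χ (η * τ) : ℝ) : ℂ) • V (y τ)‖
              ≤ ‖(χ (η * (τ + h)) : ℂ) • V δ‖
                + ‖((χ (η * (τ + h)) - χ (η * τ) : ℝ) : ℂ) • V (y τ)‖ := norm_add_le _ _
          _ ≤ _ := add_le_add h10 h11
        have hδnorm : ‖δ‖ = h * ‖Y τ‖ := by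
          have h12 : ‖Y τ‖ = h⁻¹ * ‖δ‖ := by
            show ‖h⁻¹ • δ‖ = h⁻¹ * ‖δ‖
            rw [norm_smul, Real.norm_eq_abs, abs_of_pos (inv_pos.mpr hh0)]
          rw [h12]
          field_simp
        have hfinal1 : |2 * (⟪Y τ, Yd τ⟫_ℂ).re| ≤ 2 * (h⁻¹ * (h⁻¹ * (‖δ‖ * ‖Δ‖))) := by
          rw [hre, abs_mul]
          have h13 : |(2:ℝ)| = 2 := by norm_num
          rw [h13, abs_mul, abs_mul]
          have h14 : |h⁻¹| = h⁻¹ := abs_of_pos (inv_pos.mpr hh0)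
          rw [h14]
          have h15 : h⁻¹ * |(⟪δ, Δ⟫_ℂ).im| ≤ h⁻¹ * (‖δ‖ * ‖Δ‖) :=
            mul_le_mul_of_nonneg_left him (inv_pos.mpr hh0).le
          have h16 : h⁻¹ * (h⁻¹ * |(⟪δ, Δ⟫_ℂ).im|) ≤ h⁻¹ * (h⁻¹ * (‖δ‖ * ‖Δ‖)) :=
            mul_le_mul_of_nonneg_left h15 (inv_pos.mpr hh0).le
          linarith
        have hfinal2 : 2 * (h⁻¹ * (h⁻¹ * (‖δ‖ * ‖Δ‖))) ≤
            2 * (h⁻¹ * (h⁻¹ * (‖δ‖ * (|χ (η * (τ + h))| * (‖V‖ * ‖δ‖)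
              + |χ (η * (τ + h)) - χ (η * τ)| * (‖V‖ * ‖(x:𝓗)‖))))) := by
          have h17 : ‖δ‖ * ‖Δ‖ ≤ ‖δ‖ * (|χ (η * (τ + h))| * (‖V‖ * ‖δ‖)
              + |χ (η * (τ + h)) - χ (η * τ)| * (‖V‖ * ‖(x:𝓗)‖)) :=
            mul_le_mul_of_nonneg_left hΔbound (norm_nonneg _)
          have h18 := mul_le_mul_of_nonneg_left h17 (inv_pos.mpr hh0).le
          have h19 := mul_le_mul_of_nonneg_left h18 (inv_pos.mpr hh0).le
          linarith
        have hfinal3 : 2 * (h⁻¹ * (h⁻¹ * (‖δ‖ * (|χ (η * (τ + h))| * (‖V‖ * ‖δ‖)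
              + |χ (η * (τ + h)) - χ (η * τ)| * (‖V‖ * ‖(x:𝓗)‖)))))
            = 2 * ‖Y τ‖ * (c τ * ‖Y τ‖ + d τ) := by
          rw [hδnorm, hcdef, hddef]
          field_simp
        calc |2 * (⟪Y τ, Yd τ⟫_ℂ).re| ≤ 2 * (h⁻¹ * (h⁻¹ * (‖δ‖ * ‖Δ‖))) := hfinal1
        _ ≤ _ := hfinal2
        _ = _ := hfinal3
      set φ : ℝ → ℝ := fun τ => (⟪Y τ, Y τ⟫_ℂ).re with hφdef
      have hφderiv : ∀ τ, HasDerivAt φ (2 * (⟪Y τ, Yd τ⟫_ℂ).re) τ := by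
        intro τ
        have h1 := HasDerivAt.inner ℂ (hYderiv τ) (hYderiv τ)
        have h2 := (Complex.reCLM.hasFDerivAt).comp_hasDerivAt τ h1
        have h3 : (⟪Y τ, Yd τ⟫_ℂ + ⟪Yd τ, Y τ⟫_ℂ).re = 2 * (⟪Y τ, Yd τ⟫_ℂ).re := by
          rw [← inner_conj_symm (Y τ) (Yd τ)]
          simp only [Complex.add_re, Complex.conj_re]
          ring
        simp only [Complex.reCLM_apply] at h2
        rw [h3] at h2
        exact h2
      have hφeq : ∀ τ, φ τ = ‖Y τ‖^2 := by
        intro τ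
        rw [hφdef]
        have h4 := @inner_self_eq_norm_sq ℂ _ _ _ _ (Y τ)
        simpa using h4
      have hint_c : ∀ a b : ℝ, a ≤ b → b ≤ 0 → (∫ r in a..b, c r) ≤ ‖V‖ * J / η := by
        intro a b hab hb0
        have h1 : (∫ r in a..b, c r) = ‖V‖ * ∫ r in a..b, |χ (η * (r + h))| := by
          simp only [hcdef]
          exact intervalIntegral.integral_const_mul _ _
        have h2 : (∫ r in a..b, |χ (η * (r + h))|) = ∫ r in a..b, |χ (η * r + η * h)| := by
          congr 1
          funext r
          ring_nf
        have h3 : (∫ r in a..b, |χ (η * r + η * h)|) =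
            η⁻¹ • ∫ u in (η*a + η*h)..(η*b + η*h), |χ u| :=
          intervalIntegral.integral_comp_mul_add (fun u => |χ u|) (ne_of_gt hη) (η*h)
        have hpq : η*a + η*h ≤ η*b + η*h := by nlinarith
        have hqη : η*b + η*h ≤ η := by nlinarith
        have h4 : (∫ u in (η*a + η*h)..(η*b + η*h), |χ u|) ≤ J := by
          rw [intervalIntegral.integral_of_le hpq]
          calc (∫ u in Set.Ioc (η*a + η*h) (η*b + η*h), |χ u|)
              ≤ ∫ u in Set.Iic η, |χ u| := by
                apply setIntegral_mono_set habsχ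
                  (Filter.Eventually.of_forall (fun r => abs_nonneg _))
                apply HasSubset.Subset.eventuallyLE
                intro z hz
                exact le_trans hz.2 hqη
          _ = J := by rw [hJdef]
        have h5 : (0:ℝ) ≤ ‖V‖ := norm_nonneg _
        rw [h1, h2, h3]
        rw [smul_eq_mul]
        have h6 : η⁻¹ * (∫ u in (η*a + η*h)..(η*b + η*h), |χ u|) ≤ η⁻¹ * J :=
          mul_le_mul_of_nonneg_left h4 (inv_pos.mpr hη).le
        calc ‖V‖ * (η⁻¹ * ∫ u in (η*a + η*h)..(η*b + η*h), |χ u|) ≤ ‖V‖ * (η⁻¹ * J) :=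
              mul_le_mul_of_nonneg_left h6 h5
        _ = ‖V‖ * J / η := by field_simp
      have hint_d : ∀ a b : ℝ, a ≤ b → b ≤ 0 → (∫ r in a..b, d r) ≤ ‖V‖ * Jd * ‖(x:𝓗)‖ := by
        intro a b hab hb0
        set F : ℝ → ℝ := fun r => ∫ u in Set.Iic (η*r), |deriv χ u| with hFdef
        have hF0 : ∀ r, 0 ≤ F r := fun r =>
          setIntegral_nonneg measurableSet_Iic (fun u _ => abs_nonneg _)
        have hFmono : MonotoneOn F (Set.Iic (1:ℝ)) := by
          intro r1 hr1 r2 hr2 h12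
          have hη2 : η * r2 ≤ η := by
            have : r2 ≤ 1 := hr2
            nlinarith
          apply setIntegral_mono_set (habsχ'.mono_set (Set.Iic_subset_Iic.mpr hη2))
            (Filter.Eventually.of_forall (fun r => abs_nonneg _))
          apply HasSubset.Subset.eventuallyLE
          exact Set.Iic_subset_Iic.mpr (by nlinarith)
        have hFJd : ∀ r : ℝ, r ≤ 1 → F r ≤ Jd := by
          intro r hr
          apply setIntegral_mono_set habsχ'
            (Filter.Eventually.of_forall (fun u => abs_nonneg _))
          apply HasSubset.Subset.eventuallyLE
          exact Set.Iic_subset_Iic.mpr (by nlinarith)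
        have hFint : ∀ p q : ℝ, p ≤ 1 → q ≤ 1 → IntervalIntegrable F volume p q := by
          intro p q hp hq
          apply MonotoneOn.intervalIntegrable
          apply hFmono.mono
          intro z hz
          have hz2 := hz.2
          exact le_trans hz2 (sup_le hp hq)
        -- pointwise comparison
        have hptwise : ∀ r : ℝ, r ∈ Set.Icc a b →
            |χ (η * (r + h)) - χ (η * r)| ≤ F (r + h) - F r := by
          intro r hr
          have hrh1 : η * (r + h) ≤ η := by nlinarith [hr.2]
          have hFTC2 : ∫ u in (η*r)..(η*(r+h)), deriv χ u = χ (η*(r+h)) - χ (η*r) :=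
            intervalIntegral.integral_deriv_eq_sub
              (fun u _ => (hχsmooth.differentiable (by simp)) u)
              (hχ'cont.intervalIntegrable _ _)
          have hrr : η * r ≤ η * (r + h) := by nlinarith
          have habs2 : |∫ u in (η*r)..(η*(r+h)), deriv χ u| ≤
              ∫ u in (η*r)..(η*(r+h)), |deriv χ u| :=
            intervalIntegral.abs_integral_le_integral_abs hrr
          have hsplit : (∫ u in (η*r)..(η*(r+h)), |deriv χ u|) = F (r+h) - F r := by
            rw [hFdef]
            exact (intervalIntegral.integral_Iic_sub_Iic
              (habsχ'.mono_set (Set.Iic_subset_Iic.mpr (le_trans hrr hrh1)))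
              (habsχ'.mono_set (Set.Iic_subset_Iic.mpr hrh1))).symm
          rw [← hFTC2, ← hsplit]
          exact habs2
        -- integral comparison
        have hintd1 : IntervalIntegrable (fun r => |χ (η * (r + h)) - χ (η * r)|) volume a b :=
          ((hcomp1.sub hcomp2).abs).intervalIntegrable a b
        have hintF1 : IntervalIntegrable F volume a b :=
          hFint a b (by linarith) (by linarith)
        have hintF2 : IntervalIntegrable (fun r => F (r + h)) volume a b := by
          have := (hFint (a+h) (b+h) (by linarith) (by linarith)).comp_add_right h
          simpa using this
        have hcmp : (∫ r in a..b, |χ (η * (r + h)) - χ (η * r)|) ≤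
            ∫ r in a..b, (F (r + h) - F r) :=
          intervalIntegral.integral_mono_on hab hintd1 (hintF2.sub hintF1) hptwise
        -- evaluate the RHS
        have hsplit2 : (∫ r in a..b, (F (r + h) - F r)) =
            (∫ r in b..(b+h), F r) - ∫ r in a..(a+h), F r := by
          rw [intervalIntegral.integral_sub hintF2 hintF1]
          have e1 : (∫ r in a..b, F (r + h)) = ∫ r in (a+h)..(b+h), F r :=
            intervalIntegral.integral_comp_add_right F h
          have e2 : (∫ r in a..b, F r) + (∫ r in b..(b+h), F r) = ∫ r in a..(b+h), F r :=
            intervalIntegral.integral_add_adjacent_intervals hintF1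
              (hFint b (b+h) (by linarith) (by linarith))
          have e3 : (∫ r in a..(a+h), F r) + (∫ r in (a+h)..(b+h), F r) = ∫ r in a..(b+h), F r :=
            intervalIntegral.integral_add_adjacent_intervals
              (hFint a (a+h) (by linarith) (by linarith))
              (hFint (a+h) (b+h) (by linarith) (by linarith))
          rw [e1]
          linarith
        have hup : (∫ r in b..(b+h), F r) ≤ h * F (b+h) := by
          have h20 : (∫ r in b..(b+h), F r) ≤ ∫ r in b..(b+h), F (b+h) := by
            apply intervalIntegral.integral_mono_on (by linarith)
              (hFint b (b+h) (by linarith) (by linarith)) intervalIntegrable_const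
            intro u hu
            exact hFmono (by simp only [Set.mem_Iic]; linarith [hu.2])
              (by simp only [Set.mem_Iic]; linarith) hu.2
          have h21 : (∫ r in b..(b+h), (F (b+h) : ℝ)) = h * F (b+h) := by
            rw [intervalIntegral.integral_const]
            simp [smul_eq_mul]
          linarith
        have hlow : (0:ℝ) ≤ ∫ r in a..(a+h), F r :=
          intervalIntegral.integral_nonneg (by linarith) (fun u _ => hF0 u)
        have hFbh : F (b+h) ≤ Jd := hFJd (b+h) (by linarith)
        have htot : (∫ r in a..b, |χ (η * (r + h)) - χ (η * r)|) ≤ h * Jd := by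
          have : h * F (b+h) ≤ h * Jd := mul_le_mul_of_nonneg_left hFbh hh0.le
          linarith
        -- conclude
        have hdint : (∫ r in a..b, d r) =
            (‖V‖ * ‖(x:𝓗)‖ / h) * ∫ r in a..b, |χ (η * (r + h)) - χ (η * r)| := by
          simp only [hddef]
          exact intervalIntegral.integral_const_mul _ _
        rw [hdint]
        have hcoef : (0:ℝ) ≤ ‖V‖ * ‖(x:𝓗)‖ / h :=
          div_nonneg (mul_nonneg (norm_nonneg _) (norm_nonneg _)) hh0.le
        calc (‖V‖ * ‖(x:𝓗)‖ / h) * ∫ r in a..b, |χ (η * (r + h)) - χ (η * r)|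
            ≤ (‖V‖ * ‖(x:𝓗)‖ / h) * (h * Jd) := mul_le_mul_of_nonneg_left htot hcoef
        _ = ‖V‖ * Jd * ‖(x:𝓗)‖ := by field_simp
      have hest : ∀ a b : ℝ, a ≤ b → b ≤ 0 →
          (‖Y b‖ ≤ Real.exp (‖V‖ * J / η) * (‖Y a‖ + ‖V‖ * Jd * ‖(x:𝓗)‖) ∧
           ‖Y a‖ ≤ Real.exp (‖V‖ * J / η) * (‖Y b‖ + ‖V‖ * Jd * ‖(x:𝓗)‖)) := by
        intro a b hab hb0
        have hEpos : (0:ℝ) < Real.exp (‖V‖ * J / η) := Real.exp_pos _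
        have hboth : ∀ ε : ℝ, 0 < ε →
            (‖Y b‖ ≤ Real.exp (‖V‖ * J / η) * ((‖Y a‖ + Real.sqrt ε) + ‖V‖ * Jd * ‖(x:𝓗)‖) ∧
             ‖Y a‖ ≤ Real.exp (‖V‖ * J / η) * ((‖Y b‖ + Real.sqrt ε) + ‖V‖ * Jd * ‖(x:𝓗)‖)) := by
          intro ε hε0
          set ρ : ℝ → ℝ := fun τ => Real.sqrt (φ τ + ε) with hρdef
          set ρ' : ℝ → ℝ :=
            fun τ => 1 / (2 * Real.sqrt (φ τ + ε)) * (2 * (⟪Y τ, Yd τ⟫_ℂ).re) with hρ'def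
          have hφε : ∀ τ, 0 < φ τ + ε := by
            intro τ
            have := hφeq τ
            nlinarith [sq_nonneg ‖Y τ‖]
          have hρpos : ∀ τ, 0 < ρ τ := fun τ => Real.sqrt_pos.mpr (hφε τ)
          have hρderiv : ∀ τ, HasDerivAt ρ (ρ' τ) τ := by
            intro τ
            have h1 := (Real.hasDerivAt_sqrt (ne_of_gt (hφε τ))).comp τ ((hφderiv τ).add_const ε)
            simp [hρ'def, Function.comp] at h1 ⊢
            exact h1
          have hYleρ : ∀ τ, ‖Y τ‖ ≤ ρ τ := by
            intro τ
            have h2 : ‖Y τ‖ = Real.sqrt (φ τ) := by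
              rw [hφeq τ, Real.sqrt_sq (norm_nonneg _)]
            rw [h2, hρdef]
            exact Real.sqrt_le_sqrt (by linarith)
          have hρbound : ∀ τ, |ρ' τ| ≤ c τ * ρ τ + d τ := by
            intro τ
            have hsq0 : (0:ℝ) < Real.sqrt (φ τ + ε) := hρpos τ
            have hpos2 : (0:ℝ) < 1 / (2 * Real.sqrt (φ τ + ε)) := by
              apply div_pos one_pos
              linarith
            have h3 : |ρ' τ| = 1 / (2 * Real.sqrt (φ τ + ε)) * |2 * (⟪Y τ, Yd τ⟫_ℂ).re| := by
              rw [hρ'def, abs_mul, abs_of_pos hpos2]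
            have h4 : |2 * (⟪Y τ, Yd τ⟫_ℂ).re| ≤ 2 * ρ τ * (c τ * ρ τ + d τ) := by
              have h5 := hkey τ
              have h6 : 2 * ‖Y τ‖ * (c τ * ‖Y τ‖ + d τ) ≤ 2 * ρ τ * (c τ * ρ τ + d τ) := by
                have p1 : 0 ≤ c τ * ((ρ τ - ‖Y τ‖) * (ρ τ + ‖Y τ‖)) :=
                  mul_nonneg (hc0 τ) (mul_nonneg (sub_nonneg.mpr (hYleρ τ))
                    (add_nonneg (hρpos τ).le (norm_nonneg _)))
                have p2 : 0 ≤ d τ * (ρ τ - ‖Y τ‖) :=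
                  mul_nonneg (hd0 τ) (sub_nonneg.mpr (hYleρ τ))
                nlinarith [p1, p2]
              linarith
            rw [h3]
            calc 1 / (2 * Real.sqrt (φ τ + ε)) * |2 * (⟪Y τ, Yd τ⟫_ℂ).re|
                ≤ 1 / (2 * Real.sqrt (φ τ + ε)) * (2 * ρ τ * (c τ * ρ τ + d τ)) :=
                  mul_le_mul_of_nonneg_left h4 hpos2.le
            _ = c τ * ρ τ + d τ := by
                have hρrfl : ρ τ = Real.sqrt (φ τ + ε) := rfl
                rw [hρrfl]
                field_simp
          have hsqrtle : ∀ τ, ρ τ ≤ ‖Y τ‖ + Real.sqrt ε := by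
            intro τ
            have h7 : φ τ + ε ≤ (‖Y τ‖ + Real.sqrt ε)^2 := by
              rw [hφeq τ]
              nlinarith [Real.sq_sqrt hε0.le, Real.sqrt_nonneg ε, norm_nonneg (Y τ)]
            calc ρ τ = Real.sqrt (φ τ + ε) := rfl
            _ ≤ Real.sqrt ((‖Y τ‖ + Real.sqrt ε)^2) := Real.sqrt_le_sqrt h7
            _ = ‖Y τ‖ + Real.sqrt ε := Real.sqrt_sq (by positivity)
          have hintd0 : (0:ℝ) ≤ ∫ r in a..b, d r :=
            intervalIntegral.integral_nonneg hab (fun u _ => hd0 u)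
          have hEmono : Real.exp (∫ r in a..b, c r) ≤ Real.exp (‖V‖ * J / η) :=
            Real.exp_le_exp.mpr (hint_c a b hab hb0)
          constructor
          · have hg := my_gronwall_fwd ρ ρ' c d a b hab hρderiv hccont hdcont hc0 hd0
              (fun τ => (abs_le.mp (hρbound τ)).2)
            have h8 : ρ b ≤ Real.exp (‖V‖ * J / η) * (ρ a + ∫ r in a..b, d r) := by
              calc ρ b ≤ Real.exp (∫ r in a..b, c r) * (ρ a + ∫ r in a..b, d r) := hg
              _ ≤ Real.exp (‖V‖ * J / η) * (ρ a + ∫ r in a..b, d r) :=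
                  mul_le_mul_of_nonneg_right hEmono (by linarith [(hρpos a).le])
            have h9 : ρ a + (∫ r in a..b, d r) ≤ (‖Y a‖ + Real.sqrt ε) + ‖V‖ * Jd * ‖(x:𝓗)‖ := by
              linarith [hsqrtle a, hint_d a b hab hb0]
            calc ‖Y b‖ ≤ ρ b := hYleρ b
            _ ≤ Real.exp (‖V‖ * J / η) * (ρ a + ∫ r in a..b, d r) := h8
            _ ≤ _ := mul_le_mul_of_nonneg_left h9 hEpos.le
          · have hg := my_gronwall_bwd ρ ρ' c d a b hab hρderiv hccont hdcont hc0 hd0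
              (fun τ => by linarith [(abs_le.mp (hρbound τ)).1])
            have h8 : ρ a ≤ Real.exp (‖V‖ * J / η) * (ρ b + ∫ r in a..b, d r) := by
              calc ρ a ≤ Real.exp (∫ r in a..b, c r) * (ρ b + ∫ r in a..b, d r) := hg
              _ ≤ Real.exp (‖V‖ * J / η) * (ρ b + ∫ r in a..b, d r) :=
                  mul_le_mul_of_nonneg_right hEmono (by linarith [(hρpos b).le])
            have h9 : ρ b + (∫ r in a..b, d r) ≤ (‖Y b‖ + Real.sqrt ε) + ‖V‖ * Jd * ‖(x:𝓗)‖ := by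
              linarith [hsqrtle b, hint_d a b hab hb0]
            calc ‖Y a‖ ≤ ρ a := hYleρ a
            _ ≤ Real.exp (‖V‖ * J / η) * (ρ b + ∫ r in a..b, d r) := h8
            _ ≤ _ := mul_le_mul_of_nonneg_left h9 hEpos.le
        have habsorb : ∀ A : ℝ, ∀ δ : ℝ, 0 < δ →
            Real.exp (‖V‖ * J / η) * ((A + δ / Real.exp (‖V‖ * J / η)) + ‖V‖ * Jd * ‖(x:𝓗)‖)
            = Real.exp (‖V‖ * J / η) * (A + ‖V‖ * Jd * ‖(x:𝓗)‖) + δ := by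
          intro A δ hδ
          field_simp
          ring
        constructor
        · apply le_of_forall_pos_le_add
          intro δ hδ
          have hε0 : (0:ℝ) < (δ / Real.exp (‖V‖ * J / η))^2 := by positivity
          have h10 := (hboth _ hε0).1
          have h11 : Real.sqrt ((δ / Real.exp (‖V‖ * J / η))^2) = δ / Real.exp (‖V‖ * J / η) :=
            Real.sqrt_sq (by positivity)
          rw [h11] at h10
          rw [habsorb _ δ hδ] at h10
          exact h10
        · apply le_of_forall_pos_le_add
          intro δ hδ
          have hε0 : (0:ℝ) < (δ / Real.exp (‖V‖ * J / η))^2 := by positivity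
          have h10 := (hboth _ hε0).2
          have h11 : Real.sqrt ((δ / Real.exp (‖V‖ * J / η))^2) = δ / Real.exp (‖V‖ * J / η) :=
            Real.sqrt_sq (by positivity)
          rw [h11] at h10
          rw [habsorb _ δ hδ] at h10
          exact h10
      rcases le_total s t with hst | hts
      · exact ((hest s t hst ht).1)
      · exact ((hest t s hts hs).2)
    have hlim : ∀ τ : ℝ, Tendsto (fun h : ℝ => ‖h⁻¹ • (y (τ + h) - y τ)‖)
        (𝓝[>] (0:ℝ)) (𝓝 ‖v τ‖) := by
      intro τ
      have h1 : Tendsto (fun h : ℝ => τ + h) (𝓝[>] (0:ℝ)) (𝓝[≠] τ) := by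
        refine tendsto_nhdsWithin_of_tendsto_nhds_of_eventually_within _ ?_ ?_
        · have h2 : Tendsto (fun h : ℝ => τ + h) (𝓝 (0:ℝ)) (𝓝 τ) := by
            have h3 : Continuous (fun h : ℝ => τ + h) := continuous_const.add continuous_id
            have h4 := h3.tendsto (0:ℝ)
            simpa using h4
          exact h2.mono_left nhdsWithin_le_nhds
        · filter_upwards [self_mem_nhdsWithin] with h hh
          have hh' : (0:ℝ) < h := hh
          simp only [Set.mem_compl_iff, Set.mem_singleton_iff]
          intro hcon
          have : h = 0 := by linarith [hcon]
          exact absurd this (ne_of_gt hh')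
      have h2 := (hasDerivAt_iff_tendsto_slope.mp (hy τ)).comp h1
      have h4 : Tendsto (fun h : ℝ => h⁻¹ • (y (τ + h) - y τ)) (𝓝[>] (0:ℝ)) (𝓝 (v τ)) := by
        apply h2.congr'
        filter_upwards [self_mem_nhdsWithin] with h hh
        show slope y τ (τ + h) = h⁻¹ • (y (τ + h) - y τ)
        rw [slope_def_module]
        simp
      exact h4.norm
    have hmem : Set.Ioc (0:ℝ) 1 ∈ 𝓝[>] (0:ℝ) := Ioc_mem_nhdsGT_of_mem ⟨le_refl _, zero_lt_one⟩
    apply le_of_tendsto_of_tendsto (hlim t)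
      (((hlim s).add_const (‖V‖ * Jd * ‖(x:𝓗)‖)).const_mul (Real.exp (‖V‖ * J / η)))
    filter_upwards [hmem] with h hh
    exact hstep h hh.1 hh.2
  -- identify Hop (yD τ) + y τ in terms of v τ
  have hIv : ∀ τ, Complex.I • v τ = Hop (yD τ) + (χ (η * τ) : ℂ) • V (y τ) := by
    intro τ
    rw [hvdef]
    rw [smul_smul]
    simp [Complex.I_mul_I]
  have hHv : ∀ τ, Hop (yD τ) + y τ = Complex.I • v τ + y τ - (χ (η * τ) : ℂ) • V (y τ) := by
    intro τ
    rw [hIv τ]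
    abel
  -- assemble the final bound
  have hbnd1 : ‖Hop (yD t) + y t‖ ≤ ‖v t‖ + (1 + M * ‖V‖) * ‖(x:𝓗)‖ := by
    rw [hHv t]
    have h1 : ‖Complex.I • v t + y t - (χ (η * t) : ℂ) • V (y t)‖ ≤
        ‖Complex.I • v t‖ + ‖y t‖ + ‖(χ (η * t) : ℂ) • V (y t)‖ := by
      calc ‖Complex.I • v t + y t - (χ (η * t) : ℂ) • V (y t)‖
          ≤ ‖Complex.I • v t + y t‖ + ‖(χ (η * t) : ℂ) • V (y t)‖ := norm_sub_le _ _
      _ ≤ ‖Complex.I • v t‖ + ‖y t‖ + ‖(χ (η * t) : ℂ) • V (y t)‖ := by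
          have := norm_add_le (Complex.I • v t) (y t); linarith
    have h2 : ‖Complex.I • v t‖ = ‖v t‖ := by
      rw [norm_smul, Complex.norm_I, one_mul]
    have h3 : ‖(χ (η * t) : ℂ) • V (y t)‖ ≤ M * (‖V‖ * ‖(x:𝓗)‖) := by
      rw [norm_smul, Complex.norm_real, Real.norm_eq_abs]
      have h4 : ‖V (y t)‖ ≤ ‖V‖ * ‖(x:𝓗)‖ := by
        calc ‖V (y t)‖ ≤ ‖V‖ * ‖y t‖ := V.le_opNorm _
        _ = ‖V‖ * ‖(x:𝓗)‖ := by rw [hynorm t]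
      exact mul_le_mul (hMb t ht) h4 (norm_nonneg _) hM0
    rw [hynorm t] at h1
    rw [h2] at h1
    nlinarith [norm_nonneg (x:𝓗)]
  have hvs_bound : ‖v s‖ ≤ ‖Hop x + (x:𝓗)‖ + (1 + M * ‖V‖) * ‖(x:𝓗)‖ := by
    have h1 : v s = (-Complex.I) • (Hop x + (χ (η * s) : ℂ) • V (x:𝓗)) := by
      rw [hvdef]
      simp only [hyDs]
      congr 1
      have : y s = (x:𝓗) := by simp [hydef, hWinit s]
      rw [this]
    have h2 : ‖v s‖ = ‖Hop x + (χ (η * s) : ℂ) • V (x:𝓗)‖ := by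
      rw [h1, norm_smul]
      simp
    have h3 : Hop x + (χ (η * s) : ℂ) • V (x:𝓗) =
        (Hop x + (x:𝓗)) + ((χ (η * s) : ℂ) • V (x:𝓗) - (x:𝓗)) := by abel
    have h4 : ‖(χ (η * s) : ℂ) • V (x:𝓗)‖ ≤ M * (‖V‖ * ‖(x:𝓗)‖) := by
      rw [norm_smul, Complex.norm_real, Real.norm_eq_abs]
      exact mul_le_mul (hMb s hs) (V.le_opNorm _) (norm_nonneg _) hM0
    rw [h2, h3]
    calc ‖(Hop x + (x:𝓗)) + ((χ (η * s) : ℂ) • V (x:𝓗) - (x:𝓗))‖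
        ≤ ‖Hop x + (x:𝓗)‖ + ‖(χ (η * s) : ℂ) • V (x:𝓗) - (x:𝓗)‖ := norm_add_le _ _
    _ ≤ ‖Hop x + (x:𝓗)‖ + (‖(χ (η * s) : ℂ) • V (x:𝓗)‖ + ‖(x:𝓗)‖) := by
        have := norm_sub_le ((χ (η * s) : ℂ) • V (x:𝓗)) (x:𝓗); linarith
    _ ≤ ‖Hop x + (x:𝓗)‖ + (1 + M * ‖V‖) * ‖(x:𝓗)‖ := by nlinarith [norm_nonneg (x:𝓗)]
  -- conclude
  show ‖Hop (yD t) + y t‖ ≤ _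
  have hE0 : (0:ℝ) < Real.exp (‖V‖ * J / η) := Real.exp_pos _
  have hxN : ‖(x:𝓗)‖ ≤ ‖Hop x + (x:𝓗)‖ := hxle x
  have hN0 : (0:ℝ) ≤ ‖Hop x + (x:𝓗)‖ := norm_nonneg _
  have hV0 : (0:ℝ) ≤ ‖V‖ := norm_nonneg _
  calc ‖Hop (yD t) + y t‖ ≤ ‖v t‖ + (1 + M * ‖V‖) * ‖(x:𝓗)‖ := hbnd1
  _ ≤ Real.exp (‖V‖ * J / η) * (‖v s‖ + ‖V‖ * Jd * ‖(x:𝓗)‖) + (1 + M * ‖V‖) * ‖(x:𝓗)‖ := by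
      linarith [hmain]
  _ ≤ Real.exp (‖V‖ * J / η) * ((‖Hop x + (x:𝓗)‖ + (1 + M * ‖V‖) * ‖(x:𝓗)‖) +
        ‖V‖ * Jd * ‖(x:𝓗)‖) + (1 + M * ‖V‖) * ‖(x:𝓗)‖ := by
      have h6 : ‖v s‖ + ‖V‖ * Jd * ‖(x:𝓗)‖ ≤
          (‖Hop x + (x:𝓗)‖ + (1 + M * ‖V‖) * ‖(x:𝓗)‖) + ‖V‖ * Jd * ‖(x:𝓗)‖ := by
        linarith [hvs_bound]
      exact add_le_add_left (mul_le_mul_of_nonneg_left h6 hE0.le) _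
  _ ≤ (Real.exp (‖V‖ * J / η) * (2 + M * ‖V‖ + ‖V‖ * Jd) + (1 + M * ‖V‖)) *
        ‖Hop x + (x:𝓗)‖ := by
      have hc1 : (0:ℝ) ≤ 1 + M * ‖V‖ := by nlinarith
      have hc2 : (0:ℝ) ≤ ‖V‖ * Jd := mul_nonneg hV0 hJd0
      nlinarith [mul_le_mul_of_nonneg_left hxN hc1, mul_le_mul_of_nonneg_left hxN hc2,
        mul_le_mul_of_nonneg_left (mul_le_mul_of_nonneg_left hxN hc1) hE0.le,
        mul_le_mul_of_nonneg_left (mul_le_mul_of_nonneg_left hxN hc2) hE0.le]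
end

section
/- Let H be self-adjoint, V bounded self-adjoint, χ smooth with χ,χ' ∈ L¹((-∞,0]) and χ(0)=1, η>0. Define Ω(t,s) := W(t,s)e^{i(t-s)H} where W is the propagator for H + χ(ηt)V. Then for each fixed t ≤ 0 the norm limit Ω(t) := lim_{s→-∞} Ω(t,s) exists in the bounded operators and is a unitary operator. -/
open Filter MeasureTheory Complex ContinuousLinearMap
open scoped Topology InnerProductSpace

section AuxWaveOp

variable {𝓗 : Type*} [NormedAddCommGroup 𝓗] [InnerProductSpace ℂ 𝓗] [CompleteSpace 𝓗]

lemma aux_isometry (A : 𝓗 →L[ℂ] 𝓗) (h : adjoint A ∘L A = 1) (v : 𝓗) : ‖A v‖ = ‖v‖ := by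
  have h1 : ⟪A v, A v⟫_ℂ = ⟪v, v⟫_ℂ := by
    rw [← ContinuousLinearMap.adjoint_inner_left]
    have : adjoint A (A v) = v := by
      have := congrArg (fun T : 𝓗 →L[ℂ] 𝓗 => T v) h
      simpa using this
    rw [this]
  rw [inner_self_eq_norm_sq_to_K, inner_self_eq_norm_sq_to_K] at h1
  have h2 : ‖A v‖ ^ 2 = ‖v‖ ^ 2 := by exact_mod_cast h1
  nlinarith [norm_nonneg (A v), norm_nonneg v]

lemma aux_adj_inv (A B : 𝓗 →L[ℂ] 𝓗) (h1 : B ∘L A = 1) (h2 : A ∘L adjoint A = 1) :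
    adjoint A = B := by
  calc adjoint A = (B ∘L A) ∘L adjoint A := by rw [h1]; exact (ContinuousLinearMap.id_comp _).symm
    _ = B ∘L (A ∘L adjoint A) := by rw [comp_assoc]
    _ = B := by rw [h2]; exact ContinuousLinearMap.comp_id _

lemma aux_strong_cont (D : Submodule ℂ 𝓗) (hdense : Dense (D : Set 𝓗))
    (U : ℝ → 𝓗 →L[ℂ] 𝓗) (hiso : ∀ (a : ℝ) (v : 𝓗), ‖U a v‖ = ‖v‖)
    (hD : ∀ x ∈ D, ∀ a₀ : ℝ, ContinuousAt (fun a => U a x) a₀)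
    (v : 𝓗) : Continuous fun a => U a v := by
  rw [continuous_iff_continuousAt]
  intro a₀
  rw [Metric.continuousAt_iff]
  intro ε hε
  obtain ⟨x, hxD, hxv⟩ := hdense.exists_dist_lt v (by positivity : (0:ℝ) < ε/3)
  obtain ⟨δ, hδ, hδ'⟩ := Metric.continuousAt_iff.mp (hD x hxD a₀) (ε/3) (by positivity)
  refine ⟨δ, hδ, fun {a} ha => ?_⟩
  have e1 : dist (U a v) (U a x) = dist v x := by
    rw [dist_eq_norm, ← map_sub, hiso, ← dist_eq_norm]
  have e2 : dist (U a₀ x) (U a₀ v) = dist x v := by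
    rw [dist_eq_norm, ← map_sub, hiso, ← dist_eq_norm]
  calc dist (U a v) (U a₀ v)
      ≤ dist (U a v) (U a x) + dist (U a x) (U a₀ x) + dist (U a₀ x) (U a₀ v) :=
        dist_triangle4 _ _ _ _
    _ < ε/3 + ε/3 + ε/3 := by
        rw [e1, e2]
        have h2 := hδ' ha
        have h4 : dist x v < ε / 3 := by rw [dist_comm]; exact hxv
        linarith
    _ = ε := by ring

lemma aux_joint_cont (U : ℝ → 𝓗 →L[ℂ] 𝓗) (hiso : ∀ (a : ℝ) (v : 𝓗), ‖U a v‖ = ‖v‖)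
    (hsc : ∀ v : 𝓗, Continuous fun a => U a v)
    {φ : ℝ → ℝ} {c : ℝ → 𝓗} (hφ : Continuous φ) (hc : Continuous c) :
    Continuous fun s => U (φ s) (c s) := by
  rw [continuous_iff_continuousAt]
  intro s₀
  rw [ContinuousAt, tendsto_iff_norm_sub_tendsto_zero]
  apply squeeze_zero (g := fun s => ‖c s - c s₀‖ + ‖U (φ s) (c s₀) - U (φ s₀) (c s₀)‖)
    (fun s => norm_nonneg _)
  · intro s
    have hdecomp : U (φ s) (c s) - U (φ s₀) (c s₀)
        = U (φ s) (c s - c s₀) + (U (φ s) (c s₀) - U (φ s₀) (c s₀)) := by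
      rw [map_sub]; abel
    rw [hdecomp]
    refine (norm_add_le _ _).trans ?_
    rw [hiso]
  · have h1 : Tendsto (fun s => ‖c s - c s₀‖) (𝓝 s₀) (𝓝 0) :=
      tendsto_iff_norm_sub_tendsto_zero.mp (hc.tendsto s₀)
    have h2 : Tendsto (fun s => ‖U (φ s) (c s₀) - U (φ s₀) (c s₀)‖) (𝓝 s₀) (𝓝 0) :=
      tendsto_iff_norm_sub_tendsto_zero.mp (((hsc (c s₀)).tendsto (φ s₀)).comp (hφ.tendsto s₀))
    simpa using h1.add h2

lemma aux_prod_rule (U : ℝ → 𝓗 →L[ℂ] 𝓗) (hiso : ∀ (a : ℝ) (v : 𝓗), ‖U a v‖ = ‖v‖)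
    (hsc : ∀ v : 𝓗, Continuous fun a => U a v)
    {b : ℝ → 𝓗} {b' w : 𝓗} {t s₀ : ℝ}
    (hb : HasDerivAt b b' s₀)
    (h2 : HasDerivAt (fun s => U (s - t) (b s₀)) w s₀) :
    HasDerivAt (fun s => U (s - t) (b s)) (U (s₀ - t) b' + w) s₀ := by
  rw [hasDerivAt_iff_tendsto_slope]
  have hfun : ∀ s : ℝ, slope (fun s => U (s - t) (b s)) s₀ s
      = U (s - t) (slope b s₀ s) + slope (fun s => U (s - t) (b s₀)) s₀ s := by
    intro s
    simp only [slope_def_module, map_smul_of_tower]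
    rw [← smul_add]
    congr 1
    rw [map_sub]
    abel
  have T1 : Tendsto (fun s => U (s - t) (slope b s₀ s)) (𝓝[≠] s₀) (𝓝 (U (s₀ - t) b')) := by
    rw [tendsto_iff_norm_sub_tendsto_zero]
    apply squeeze_zero (g := fun s => ‖slope b s₀ s - b'‖ + ‖U (s - t) b' - U (s₀ - t) b'‖)
      (fun s => norm_nonneg _)
    · intro s
      have : U (s - t) (slope b s₀ s) - U (s₀ - t) b'
          = U (s - t) (slope b s₀ s - b') + (U (s - t) b' - U (s₀ - t) b') := by
        rw [map_sub]; abel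
      rw [this]
      refine (norm_add_le _ _).trans ?_
      rw [hiso]
    · have h1 : Tendsto (fun s => ‖slope b s₀ s - b'‖) (𝓝[≠] s₀) (𝓝 0) :=
        tendsto_iff_norm_sub_tendsto_zero.mp (hasDerivAt_iff_tendsto_slope.mp hb)
      have h2' : Tendsto (fun s : ℝ => ‖U (s - t) b' - U (s₀ - t) b'‖) (𝓝[≠] s₀) (𝓝 0) := by
        apply Tendsto.mono_left _ nhdsWithin_le_nhds
        exact tendsto_iff_norm_sub_tendsto_zero.mp
          (((hsc b').tendsto (s₀ - t)).comp ((continuous_id.sub continuous_const).tendsto s₀))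
      simpa using h1.add h2'
  have T2 : Tendsto (slope (fun s => U (s - t) (b s₀)) s₀) (𝓝[≠] s₀) (𝓝 w) :=
    hasDerivAt_iff_tendsto_slope.mp h2
  have := T1.add T2
  refine this.congr' ?_
  filter_upwards with s
  exact (hfun s).symm


end AuxWaveOp

set_option maxHeartbeats 1000000 in
/-- For each fixed `t ≤ 0` the norm limit
`Ω(t) := lim_{s → -∞} W(t,s) e^{i(t-s)H}` exists in the bounded operators and is unitary. -/
theorem wave_like_limit_exists
    {𝓗 : Type*} [NormedAddCommGroup 𝓗] [InnerProductSpace ℂ 𝓗] [CompleteSpace 𝓗]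
    -- the (possibly unbounded) nonnegative self-adjoint operator H with domain D
    (D : Submodule ℂ 𝓗) (hdense : Dense (D : Set 𝓗))
    (Hop : D →ₗ[ℂ] 𝓗)
    (hsym : ∀ x y : D, ⟪Hop x, (y : 𝓗)⟫_ℂ = ⟪(x : 𝓗), Hop y⟫_ℂ)
    (hpos : ∀ x : D, 0 ≤ (⟪(x : 𝓗), Hop x⟫_ℂ).re)
    -- the bounded self-adjoint perturbation V
    (V : 𝓗 →L[ℂ] 𝓗) (hV : IsSelfAdjoint V)
    -- the smooth switching function χ with χ, χ' ∈ L¹((-∞,0]) and χ(0) = 1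
    (χ : ℝ → ℝ) (hχsmooth : ContDiff ℝ (⊤ : ℕ∞) χ)
    (hχint : IntegrableOn χ (Set.Iic 0))
    (hχ'int : IntegrableOn (deriv χ) (Set.Iic 0))
    (hχ0 : χ 0 = 1)
    -- the adiabatic parameter
    (η : ℝ) (hη : 0 < η)
    -- the unitary propagator W(t,s) solving i ∂ₜ W(t,s) = (H + χ(ηt)V) W(t,s), W(s,s) = 1
    (W : ℝ → ℝ → (𝓗 →L[ℂ] 𝓗))
    (hWinit : ∀ s : ℝ, W s s = 1)
    (hWunitary : ∀ t s : ℝ,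
      (W t s) ∘L (adjoint (W t s)) = 1 ∧ (adjoint (W t s)) ∘L (W t s) = 1)
    (hWcocycle : ∀ t r s : ℝ, (W t r) ∘L (W r s) = W t s)
    (hWdom : ∀ t s : ℝ, ∀ x : D, W t s (x : 𝓗) ∈ D)
    (hWeq : ∀ s : ℝ, ∀ x : D, ∀ t : ℝ,
      HasDerivAt (fun τ : ℝ => W τ s (x : 𝓗))
        ((-Complex.I) • (Hop ⟨W t s (x : 𝓗), hWdom t s x⟩
          + (χ (η * t) : ℂ) • V (W t s (x : 𝓗)))) t)
    -- the unitary group U(r) = e^{irH} generated by H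
    (U : ℝ → (𝓗 →L[ℂ] 𝓗))
    (hU0 : U 0 = 1)
    (hUadd : ∀ a b : ℝ, U (a + b) = U a ∘L U b)
    (hUunitary : ∀ a : ℝ, adjoint (U a) = U (-a))
    (hUdom : ∀ a : ℝ, ∀ x : D, U a (x : 𝓗) ∈ D)
    (hUder : ∀ x : D, ∀ a : ℝ,
      HasDerivAt (fun τ : ℝ => U τ (x : 𝓗)) (Complex.I • U a (Hop x)) a) :
    -- conclusion: for every fixed t ≤ 0 the norm limit Ω(t) = lim_{s → -∞} W(t,s) e^{i(t-s)H}
    -- exists in the bounded operators and is unitary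
    ∀ t : ℝ, t ≤ 0 →
      ∃ Ω : 𝓗 →L[ℂ] 𝓗,
        (Ω ∘L adjoint Ω = 1 ∧ adjoint Ω ∘L Ω = 1) ∧
        Tendsto (fun s : ℝ => W t s ∘L U (t - s)) atBot (𝓝 Ω) := by
  intro t _
  -- basic unitarity facts
  have hUcomp : ∀ a : ℝ, adjoint (U a) ∘L U a = 1 := by
    intro a
    rw [hUunitary a, ← hUadd, neg_add_cancel, hU0]
  have hUiso : ∀ (a : ℝ) (v : 𝓗), ‖U a v‖ = ‖v‖ := fun a v => aux_isometry _ (hUcomp a) v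
  have hWadj : ∀ a b : ℝ, adjoint (W a b) = W b a := by
    intro a b
    apply aux_adj_inv
    · rw [hWcocycle b a b, hWinit]
    · exact (hWunitary a b).1
  have hWiso : ∀ (a b : ℝ) (v : 𝓗), ‖W a b v‖ = ‖v‖ :=
    fun a b v => aux_isometry _ (hWunitary a b).2 v
  -- strong continuity of U
  have hUsc : ∀ v : 𝓗, Continuous fun a => U a v := by
    apply aux_strong_cont D hdense U hUiso
    intro x hx a₀
    exact (hUder ⟨x, hx⟩ a₀).continuousAt
  have hWsc : ∀ (r : ℝ) (x : D), Continuous fun s => W s r (x : 𝓗) := by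
    intro r x
    rw [continuous_iff_continuousAt]
    intro s
    exact (hWeq r x s).continuousAt
  -- the key derivative computation
  have key : ∀ (x : D) (s : ℝ),
      HasDerivAt (fun s' => U (s' - t) (W s' t (x : 𝓗)))
        ((-(Complex.I * (χ (η * s) : ℂ))) • U (s - t) (V (W s t (x : 𝓗)))) s := by
    intro x s₀
    have hb := hWeq t x s₀
    have hmem : W s₀ t (x : 𝓗) ∈ D := hWdom s₀ t x
    have h2 : HasDerivAt (fun s => U (s - t) (W s₀ t (x : 𝓗)))
        (Complex.I • U (s₀ - t) (Hop ⟨W s₀ t (x : 𝓗), hmem⟩)) s₀ := by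
      have hU := hUder ⟨W s₀ t (x : 𝓗), hmem⟩ (s₀ - t)
      have hg : HasDerivAt (fun s : ℝ => s - t) 1 s₀ := (hasDerivAt_id s₀).sub_const t
      have := hU.scomp s₀ hg
      simpa [Function.comp_def] using this
    have hprod := aux_prod_rule U hUiso hUsc hb h2
    convert hprod using 1
    rw [_root_.map_smul, map_add, _root_.map_smul]
    module
  -- the integrable tail function
  set f' : ℝ → ℝ := Set.indicator (Set.Iic 0) (fun r => |χ (η * r)|) with hf'def
  have hf'nonneg : ∀ r, 0 ≤ f' r := by
    intro r
    rw [hf'def]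
    exact Set.indicator_nonneg (fun r _ => abs_nonneg _) r
  have hf'int : Integrable f' := by
    have h1 : Integrable (Set.indicator (Set.Iic 0) (fun r => |χ r|)) := by
      rw [integrable_indicator_iff measurableSet_Iic]
      exact hχint.abs
    have h2 := h1.comp_mul_left' hη.ne'
    have hf'eq : (fun r => Set.indicator (Set.Iic 0) (fun u => |χ u|) (η * r)) = f' := by
      funext r
      rw [hf'def]
      by_cases hr : r ≤ 0
      · rw [Set.indicator_of_mem (Set.mem_Iic.2 (mul_nonpos_of_nonneg_of_nonpos hη.le hr)),
          Set.indicator_of_mem (Set.mem_Iic.2 hr)]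
      · rw [Set.indicator_of_notMem, Set.indicator_of_notMem]
        · simpa using hr
        · simp only [Set.mem_Iic, not_le] at hr ⊢
          exact mul_pos hη hr
    rwa [hf'eq] at h2
  set G : ℝ → ℝ := fun s => ∫ r in Set.Iic s, f' r with hGdef
  have hGmono : Monotone G := by
    intro s₁ s₂ h
    apply setIntegral_mono_set hf'int.integrableOn
    · exact Filter.Eventually.of_forall hf'nonneg
    · exact HasSubset.Subset.eventuallyLE (Set.Iic_subset_Iic.2 h)
  have hGnonneg : ∀ s, 0 ≤ G s :=
    fun s => setIntegral_nonneg measurableSet_Iic (fun r _ => hf'nonneg r)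
  have hGtend : Tendsto G atBot (𝓝 (⨅ s, G s)) :=
    tendsto_atBot_ciInf hGmono ⟨0, fun y ⟨s, hs⟩ => hs ▸ hGnonneg s⟩
  have hGdiff : ∀ s₂ s₁ : ℝ, G s₁ - G s₂ = ∫ s in s₂..s₁, f' s := by
    intro s₂ s₁
    exact intervalIntegral.integral_Iic_sub_Iic hf'int.integrableOn hf'int.integrableOn
  -- pointwise FTC bound on D
  have hΦbound : ∀ (x : D), ∀ s₂ s₁ : ℝ, s₂ ≤ s₁ → s₁ ≤ 0 →
      ‖U (s₁ - t) (W s₁ t (x : 𝓗)) - U (s₂ - t) (W s₂ t (x : 𝓗))‖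
        ≤ (‖V‖ * (G s₁ - G s₂)) * ‖(x : 𝓗)‖ := by
    intro x s₂ s₁ h12 h10
    set d : ℝ → 𝓗 :=
      fun s => (-(Complex.I * (χ (η * s) : ℂ))) • U (s - t) (V (W s t (x : 𝓗))) with hddef
    have hdc : Continuous d := by
      rw [hddef]
      apply Continuous.smul
      · exact (continuous_const.mul (Complex.continuous_ofReal.comp
          (hχsmooth.continuous.comp (continuous_const.mul continuous_id)))).neg
      · exact aux_joint_cont U hUiso hUsc (continuous_id.sub continuous_const)
          (V.continuous.comp (hWsc t x))
    have hFTC : ∫ s in s₂..s₁, d s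
        = U (s₁ - t) (W s₁ t (x : 𝓗)) - U (s₂ - t) (W s₂ t (x : 𝓗)) :=
      intervalIntegral.integral_eq_sub_of_hasDerivAt (fun s _ => key x s)
        (hdc.intervalIntegrable s₂ s₁)
    rw [← hFTC]
    calc ‖∫ s in s₂..s₁, d s‖ ≤ ∫ s in s₂..s₁, ‖d s‖ :=
        intervalIntegral.norm_integral_le_integral_norm h12
      _ ≤ ∫ s in s₂..s₁, f' s * (‖V‖ * ‖(x : 𝓗)‖) := by
          apply intervalIntegral.integral_mono_on h12 (hdc.norm.intervalIntegrable _ _)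
            (hf'int.mul_const _).intervalIntegrable
          intro s hs
          have hs0 : s ≤ 0 := le_trans hs.2 h10
          have hnd : ‖d s‖ = |χ (η * s)| * ‖V (W s t (x : 𝓗))‖ := by
            rw [hddef]
            simp only [norm_smul, hUiso, norm_neg, norm_mul, Complex.norm_I, Complex.norm_real, Real.norm_eq_abs, one_mul]
          rw [hnd, hf'def, Set.indicator_of_mem (Set.mem_Iic.2 hs0)]
          apply mul_le_mul_of_nonneg_left _ (abs_nonneg _)
          calc ‖V (W s t (x : 𝓗))‖ ≤ ‖V‖ * ‖W s t (x : 𝓗)‖ := V.le_opNorm _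
            _ = ‖V‖ * ‖(x : 𝓗)‖ := by rw [hWiso]
      _ = (‖V‖ * (G s₁ - G s₂)) * ‖(x : 𝓗)‖ := by
          rw [intervalIntegral.integral_mul_const, ← hGdiff]
          ring
  -- operator-norm bound
  set Θ : ℝ → 𝓗 →L[ℂ] 𝓗 := fun s => U (s - t) ∘L W s t with hΘdef
  set Fop : ℝ → 𝓗 →L[ℂ] 𝓗 := fun s => W t s ∘L U (t - s) with hFdef
  have hadjF : ∀ s, adjoint (Fop s) = Θ s := by
    intro s
    rw [hFdef, hΘdef]
    simp only
    rw [adjoint_comp, hUunitary, hWadj, neg_sub]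
  have hΘbound : ∀ s₂ s₁ : ℝ, s₂ ≤ s₁ → s₁ ≤ 0 →
      ‖Θ s₁ - Θ s₂‖ ≤ ‖V‖ * (G s₁ - G s₂) := by
    intro s₂ s₁ h12 h10
    have hC : 0 ≤ ‖V‖ * (G s₁ - G s₂) :=
      mul_nonneg (norm_nonneg _) (sub_nonneg.2 (hGmono h12))
    apply ContinuousLinearMap.opNorm_le_bound _ hC
    intro v
    have hclosed : IsClosed {y : 𝓗 | ‖(Θ s₁ - Θ s₂) y‖ ≤ (‖V‖ * (G s₁ - G s₂)) * ‖y‖} :=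
      isClosed_le ((Θ s₁ - Θ s₂).continuous.norm) (continuous_const.mul continuous_norm)
    have hsub : (D : Set 𝓗) ⊆ {y : 𝓗 | ‖(Θ s₁ - Θ s₂) y‖ ≤ (‖V‖ * (G s₁ - G s₂)) * ‖y‖} := by
      intro y hy
      have hby := hΦbound ⟨y, hy⟩ s₂ s₁ h12 h10
      simpa [hΘdef, ContinuousLinearMap.sub_apply] using hby
    exact (hclosed.closure_subset_iff.mpr hsub) (hdense v)
  have hFbound : ∀ s₂ s₁ : ℝ, s₂ ≤ s₁ → s₁ ≤ 0 →
      ‖Fop s₁ - Fop s₂‖ ≤ ‖V‖ * (G s₁ - G s₂) := by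
    intro s₂ s₁ h12 h10
    have hΘsub : Θ s₁ - Θ s₂ = adjoint (Fop s₁ - Fop s₂) := by
      rw [map_sub, hadjF, hadjF]
    have hnorm : ‖Fop s₁ - Fop s₂‖ = ‖Θ s₁ - Θ s₂‖ := by
      rw [hΘsub]
      exact (LinearIsometryEquiv.norm_map _ _).symm
    rw [hnorm]
    exact hΘbound _ _ h12 h10
  -- Cauchy criterion
  have hcauchy : CauchySeq (fun r : ℝ => Fop (-r)) := by
    rw [Metric.cauchySeq_iff]
    intro ε hε
    have hV1 : (0:ℝ) < ‖V‖ + 1 := by positivity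
    have hε' : 0 < ε / (2 * (‖V‖ + 1)) := by positivity
    obtain ⟨N, hN⟩ := Filter.eventually_atBot.mp
      ((Metric.tendsto_nhds.mp hGtend) _ hε')
    have hkey : ‖V‖ * (2 * (ε / (2 * (‖V‖ + 1)))) < ε := by
      have h2 : ‖V‖ / (‖V‖ + 1) < 1 := (div_lt_one hV1).2 (by linarith)
      calc ‖V‖ * (2 * (ε / (2 * (‖V‖ + 1)))) = (‖V‖ / (‖V‖ + 1)) * ε := by
            field_simp
        _ < 1 * ε := mul_lt_mul_of_pos_right h2 hε
        _ = ε := one_mul ε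
    refine ⟨max (-N) 0, fun m hm n hn => ?_⟩
    have hm' : -m ≤ N := by
      have := le_trans (le_max_left (-N) 0) hm
      linarith
    have hm0 : -m ≤ 0 := by
      have := le_trans (le_max_right (-N) 0) hm
      linarith
    have hn' : -n ≤ N := by
      have := le_trans (le_max_left (-N) 0) hn
      linarith
    have hn0 : -n ≤ 0 := by
      have := le_trans (le_max_right (-N) 0) hn
      linarith
    have hGm := hN (-m) hm'
    have hGn := hN (-n) hn'
    rw [Real.dist_eq] at hGm hGn
    have habsm := abs_lt.mp hGm
    have habsn := abs_lt.mp hGn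
    rcases le_total (-m) (-n) with h | h
    · have hb := hFbound (-m) (-n) h hn0
      have hd : dist (Fop (-m)) (Fop (-n)) ≤ ‖V‖ * (G (-n) - G (-m)) := by
        rw [dist_eq_norm, norm_sub_rev]
        exact hb
      have hG2 : G (-n) - G (-m) ≤ 2 * (ε / (2 * (‖V‖ + 1))) := by linarith
      have := mul_le_mul_of_nonneg_left hG2 (norm_nonneg V)
      linarith
    · have hb := hFbound (-n) (-m) h hm0
      have hd : dist (Fop (-m)) (Fop (-n)) ≤ ‖V‖ * (G (-m) - G (-n)) := by
        rw [dist_eq_norm]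
        exact hb
      have hG2 : G (-m) - G (-n) ≤ 2 * (ε / (2 * (‖V‖ + 1))) := by linarith
      have := mul_le_mul_of_nonneg_left hG2 (norm_nonneg V)
      linarith
  obtain ⟨Ω, hΩ⟩ := cauchySeq_tendsto_of_complete hcauchy
  have hFtend : Tendsto Fop atBot (𝓝 Ω) := by
    have h := hΩ.comp tendsto_neg_atBot_atTop
    have heq : ((fun r : ℝ => Fop (-r)) ∘ fun s : ℝ => -s) = Fop := by
      funext s
      simp
    rwa [heq] at h
  -- unitarity of the limit
  have e1 : ∀ s : ℝ, U (t - s) ∘L U (s - t) = 1 := by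
    intro s
    rw [← hUadd, show (t - s) + (s - t) = 0 by ring, hU0]
  have e1' : ∀ s : ℝ, U (s - t) ∘L U (t - s) = 1 := by
    intro s
    rw [← hUadd, show (s - t) + (t - s) = 0 by ring, hU0]
  have e2 : ∀ s : ℝ, W t s ∘L W s t = 1 := fun s => by rw [hWcocycle, hWinit]
  have e2' : ∀ s : ℝ, W s t ∘L W t s = 1 := fun s => by rw [hWcocycle, hWinit]
  have hFunit1 : ∀ s : ℝ, Fop s ∘L adjoint (Fop s) = 1 := by
    intro s
    rw [hadjF, hΘdef, hFdef]
    simp only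
    rw [comp_assoc, ← comp_assoc (U (t - s)) (U (s - t)) (W s t), e1 s,
      ContinuousLinearMap.one_def, ContinuousLinearMap.id_comp, e2 s]
    exact ContinuousLinearMap.one_def
  have hFunit2 : ∀ s : ℝ, adjoint (Fop s) ∘L Fop s = 1 := by
    intro s
    rw [hadjF, hΘdef, hFdef]
    simp only
    rw [comp_assoc, ← comp_assoc (W s t) (W t s) (U (t - s)), e2' s,
      ContinuousLinearMap.one_def, ContinuousLinearMap.id_comp, e1' s]
    exact ContinuousLinearMap.one_def
  have hadj_tend : Tendsto (fun s => adjoint (Fop s)) atBot (𝓝 (adjoint Ω)) := by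
    have hc : Continuous (fun A : 𝓗 →L[ℂ] 𝓗 => adjoint A) :=
      (ContinuousLinearMap.adjoint : (𝓗 →L[ℂ] 𝓗) ≃ₗᵢ⋆[ℂ] (𝓗 →L[ℂ] 𝓗)).continuous
    exact (hc.tendsto Ω).comp hFtend
  have hmul1 : Tendsto (fun s => Fop s * adjoint (Fop s)) atBot (𝓝 (Ω * adjoint Ω)) :=
    hFtend.mul hadj_tend
  have hmul2 : Tendsto (fun s => adjoint (Fop s) * Fop s) atBot (𝓝 (adjoint Ω * Ω)) :=
    hadj_tend.mul hFtend
  have hu1 : Ω ∘L adjoint Ω = 1 := by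
    have heq : (fun s : ℝ => Fop s * adjoint (Fop s)) = fun _ => (1 : 𝓗 →L[ℂ] 𝓗) :=
      funext fun s => by rw [ContinuousLinearMap.mul_def]; exact hFunit1 s
    rw [heq] at hmul1
    have hres := tendsto_nhds_unique hmul1 tendsto_const_nhds
    rwa [ContinuousLinearMap.mul_def] at hres
  have hu2 : adjoint Ω ∘L Ω = 1 := by
    have heq : (fun s : ℝ => adjoint (Fop s) * Fop s) = fun _ => (1 : 𝓗 →L[ℂ] 𝓗) :=
      funext fun s => by rw [ContinuousLinearMap.mul_def]; exact hFunit2 s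
    rw [heq] at hmul2
    have hres := tendsto_nhds_unique hmul2 tendsto_const_nhds
    rwa [ContinuousLinearMap.mul_def] at hres
  exact ⟨Ω, ⟨hu1, hu2⟩, hFtend⟩
end

section
/- Let T be trace class and Π a projection of multiplication by a compactly supported function such that ρ(H)Π is trace class and Ω₊Π_fΩ₊* commutes with ρ(H) (where Ω₊ is a wave operator intertwining H̊ and H, and [H̊,Π_f]=0). Then Tr(Ω₊Π_fΩ₊*[ρ(H),Π]) = 0. -/
open ContinuousLinearMap

/-!
Write `d = [a, p]` for a commutator with an idempotent `p`. Then `d = p d + d p`, and cyclicity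
of the trace moves `s` and the inserted copies of `p` around until both `Tr (s p d)` and
`Tr (s d p)` are expressed through `Tr (a s p)` and `Tr (a p s p)`, with opposite signs; the
commutation `s a = a s` is what matches `Tr (a p s) = Tr (s a p)` with `Tr (a s p)`. The detour
is needed because `s p a` alone need not be trace class, so `Tr (s [a, p])` cannot simply be split.
-/

theorem commutator_idempotent_eq_mul_add_mul {R : Type*} [Ring R] {a p : R} (hp : p * p = p) :
    a * p - p * a = p * (a * p - p * a) + (a * p - p * a) * p := by
  simp only [mul_sub, sub_mul, ← mul_assoc, hp]
  simp only [mul_assoc, hp]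
  abel

section TraceIdeal

variable {R M : Type*} [Ring R] [AddCommGroup M] {TC : R → Prop} {Tr : R → M}
  (hmul_left : ∀ A B, TC A → TC (B * A)) (hmul_right : ∀ A B, TC A → TC (A * B))
  (htrace_sub : ∀ A B, TC A → TC B → Tr (A - B) = Tr A - Tr B)
  (htrace_comm : ∀ A B, TC A → Tr (A * B) = Tr (B * A))
  {a p s : R}

include hmul_left hmul_right htrace_sub htrace_comm in
theorem trace_mul_commutator_mul_idempotent (hp : p * p = p) (hsa : Commute s a)
    (hd : TC (a * p - p * a)) (hap : TC (a * p)) :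
    Tr (s * (a * p - p * a) * p) = Tr (a * (s * p)) - Tr (a * p * (s * p)) := by
  have hsd : TC (s * (a * p - p * a)) := hmul_left _ s hd
  have haps : TC (a * p * s) := hmul_right _ s hap
  have hexpand : (a * p - p * a) * (p * s) = a * p * s - p * (a * p * s) := by
    simp only [sub_mul, mul_assoc, ← mul_assoc p p, hp]
  calc Tr (s * (a * p - p * a) * p)
      = Tr ((a * p - p * a) * (p * s)) := by
        rw [htrace_comm _ p hsd, ← mul_assoc, ← htrace_comm _ _ hd]
    _ = Tr (a * p * s) - Tr (p * (a * p * s)) := by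
        rw [hexpand, htrace_sub _ _ haps (hmul_left _ p haps)]
    _ = Tr (a * (s * p)) - Tr (a * p * (s * p)) := by
        rw [htrace_comm _ s hap, ← mul_assoc, hsa.eq, ← htrace_comm _ p haps, mul_assoc,
          mul_assoc]

include hmul_left hmul_right htrace_sub htrace_comm in
theorem trace_mul_idempotent_mul_commutator (hp : p * p = p)
    (hd : TC (a * p - p * a)) (hap : TC (a * p)) (hasp : TC (a * (s * p))) :
    Tr (s * (p * (a * p - p * a))) = Tr (a * p * (s * p)) - Tr (a * (s * p)) := by
  calc Tr (s * (p * (a * p - p * a)))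
      = Tr ((a * p - p * a) * (s * p)) := by rw [← mul_assoc, ← htrace_comm _ _ hd]
    _ = Tr (a * p * (s * p)) - Tr (p * (a * (s * p))) := by
        rw [sub_mul, mul_assoc p a,
          htrace_sub _ _ (hmul_right _ _ hap) (hmul_left _ p hasp)]
    _ = Tr (a * p * (s * p)) - Tr (a * (s * p)) := by
        rw [← htrace_comm _ p hasp, mul_assoc a (s * p), mul_assoc s, hp]

include hmul_left hmul_right htrace_sub htrace_comm in
theorem trace_mul_commutator_idempotent_eq_zero (hp : p * p = p) (hsa : Commute s a)
    (hd : TC (a * p - p * a)) (hap : TC (a * p)) (hasp : TC (a * (s * p))) :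
    Tr (s * (a * p - p * a)) = 0 := by
  have hsd : TC (s * (a * p - p * a)) := hmul_left _ s hd
  have hsplit : s * (p * (a * p - p * a)) = s * (a * p - p * a) - s * (a * p - p * a) * p := by
    rw [eq_sub_iff_add_eq, mul_assoc, ← mul_add, ← commutator_idempotent_eq_mul_add_mul hp]
  have key := trace_mul_idempotent_mul_commutator hmul_left hmul_right htrace_sub htrace_comm
    hp hd hap hasp
  rw [hsplit, htrace_sub _ _ hsd (hmul_right _ p hsd),
    trace_mul_commutator_mul_idempotent hmul_left hmul_right htrace_sub htrace_comm
      hp hsa hd hap] at key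
  linear_combination (norm := abel_nf) key

end TraceIdeal

theorem continuity_equation_trace_vanishes_general
    {𝓗 : Type*} [NormedAddCommGroup 𝓗] [InnerProductSpace ℂ 𝓗]
    -- abstract trace-class ideal and trace
    (TC : (𝓗 →L[ℂ] 𝓗) → Prop) (Tr : (𝓗 →L[ℂ] 𝓗) → ℂ)
    (hTC_mul_left : ∀ A B : 𝓗 →L[ℂ] 𝓗, TC A → TC (B ∘L A))
    (hTC_mul_right : ∀ A B : 𝓗 →L[ℂ] 𝓗, TC A → TC (A ∘L B))
    (hTr_sub : ∀ A B : 𝓗 →L[ℂ] 𝓗, TC A → TC B → Tr (A - B) = Tr A - Tr B)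
    (hTr_cyc : ∀ A B : 𝓗 →L[ℂ] 𝓗, TC A → Tr (A ∘L B) = Tr (B ∘L A))
    (S : 𝓗 →L[ℂ] 𝓗)
    -- ρ(H) and the compactly supported projection π = π₁
    (ρH π1 : 𝓗 →L[ℂ] 𝓗) (hπ1_proj : π1 ∘L π1 = π1)
    (hTC_comm : TC (ρH ∘L π1 - π1 ∘L ρH))
    (hTC_ρπ : TC (ρH ∘L π1))
    (hTC_ρSπ : TC (ρH ∘L S ∘L π1))
    -- intertwining: S commutes with ρ(H)
    (hcomm : S ∘L ρH = ρH ∘L S) :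
    Tr (S ∘L (ρH ∘L π1 - π1 ∘L ρH)) = 0 :=
  trace_mul_commutator_idempotent_eq_zero hTC_mul_left hTC_mul_right hTr_sub hTr_cyc
    hπ1_proj hcomm hTC_comm hTC_ρπ hTC_ρSπ

/-- Continuity-equation lemma: if `π` is a compactly supported
multiplication operator with `[ρ(H), π]` and `ρ(H) π` trace class, if
`S = Ω₊ Π_f Ω₊*` commutes with `ρ(H)` (by the intertwining property of the wave operator
and `[H̊, Π_f] = 0`), and `ρ(H) S π` is trace class, then `Tr (S [ρ(H), π]) = 0`. -/
theorem continuity_equation_trace_vanishes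
    {𝓗 : Type*} [NormedAddCommGroup 𝓗] [InnerProductSpace ℂ 𝓗] [CompleteSpace 𝓗]
    -- abstract trace-class ideal and trace
    (TC : (𝓗 →L[ℂ] 𝓗) → Prop) (Tr : (𝓗 →L[ℂ] 𝓗) → ℂ)
    (hTC_mul_left : ∀ A B : 𝓗 →L[ℂ] 𝓗, TC A → TC (B ∘L A))
    (hTC_mul_right : ∀ A B : 𝓗 →L[ℂ] 𝓗, TC A → TC (A ∘L B))
    (hTr_sub : ∀ A B : 𝓗 →L[ℂ] 𝓗, TC A → TC B → Tr (A - B) = Tr A - Tr B)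
    (hTr_cyc : ∀ A B : 𝓗 →L[ℂ] 𝓗, TC A → Tr (A ∘L B) = Tr (B ∘L A))
    -- the wave operator Ω₊ and the lead projection Π_f
    (Ωp Pf : 𝓗 →L[ℂ] 𝓗) (hPf_proj : Pf ∘L Pf = Pf) (hPf_sa : IsSelfAdjoint Pf)
    (S : 𝓗 →L[ℂ] 𝓗) (hS : S = Ωp ∘L Pf ∘L adjoint Ωp)
    -- ρ(H) and the compactly supported projection π = π₁
    (ρH π1 : 𝓗 →L[ℂ] 𝓗) (hπ1_proj : π1 ∘L π1 = π1) (hπ1_sa : IsSelfAdjoint π1)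
    (hTC_comm : TC (ρH ∘L π1 - π1 ∘L ρH))
    (hTC_ρπ : TC (ρH ∘L π1))
    (hTC_ρSπ : TC (ρH ∘L S ∘L π1))
    -- intertwining: S commutes with ρ(H)
    (hcomm : S ∘L ρH = ρH ∘L S) :
    Tr (S ∘L (ρH ∘L π1 - π1 ∘L ρH)) = 0 :=
  continuity_equation_trace_vanishes_general TC Tr hTC_mul_left hTC_mul_right hTr_sub hTr_cyc S ρH
    π1 hπ1_proj hTC_comm hTC_ρπ hTC_ρSπ hcomm
end
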